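/- arXiv:1207.3761 — 2 statements merged into one kernel-verified Lean document; each statement's English description precedes it below -/
import Mathlib

section
/- Let three rays from a point X in the Euclidean plane carry the centers C₁, C₂, C₃ at distances r₁, r₂, r₃ > 0 from X, such that angle C₁XC₂ = π/3, angle C₂XC₃ = π/3, and angle C₁XC₃ = 2π/3. If 1/r₁ - 1/r₂ + 1/r₃ = 0, then the three points C₁, C₂, C₃ are collinear. -/
open EuclideanGeometry
open scoped EuclideanGeometry Real RealInnerProductSpace

theorem stmt_0 (X C₁ C₂ C₃ : EuclideanSpace ℝ (Fin 2))
    (r₁ r₂ r₃ : ℝ)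
    (hr₁ : r₁ = dist X C₁) (hr₂ : r₂ = dist X C₂) (hr₃ : r₃ = dist X C₃)
    (h₁ : 0 < r₁) (h₂ : 0 < r₂) (h₃ : 0 < r₃)
    (a₁₂ : ∠ C₁ X C₂ = π / 3) (a₂₃ : ∠ C₂ X C₃ = π / 3)
    (a₁₃ : ∠ C₁ X C₃ = 2 * π / 3)
    (hsum : 1 / r₁ - 1 / r₂ + 1 / r₃ = 0) :
    Collinear ℝ ({C₁, C₂, C₃} : Set (EuclideanSpace ℝ (Fin 2))) := by
  set u₁ : EuclideanSpace ℝ (Fin 2) := C₁ -ᵥ X with hu₁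
  set u₂ : EuclideanSpace ℝ (Fin 2) := C₂ -ᵥ X with hu₂
  set u₃ : EuclideanSpace ℝ (Fin 2) := C₃ -ᵥ X with hu₃
  have n₁ : ‖u₁‖ = r₁ := by rw [hu₁, hr₁, dist_comm]; exact (dist_eq_norm_vsub _ _ _).symm
  have n₂ : ‖u₂‖ = r₂ := by rw [hu₂, hr₂, dist_comm]; exact (dist_eq_norm_vsub _ _ _).symm
  have n₃ : ‖u₃‖ = r₃ := by rw [hu₃, hr₃, dist_comm]; exact (dist_eq_norm_vsub _ _ _).symm
  have i₁₂ : ⟪u₁, u₂⟫ = r₁ * r₂ / 2 := by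
    have := InnerProductGeometry.cos_angle_mul_norm_mul_norm u₁ u₂
    rw [show InnerProductGeometry.angle u₁ u₂ = ∠ C₁ X C₂ from rfl, a₁₂,
      Real.cos_pi_div_three, n₁, n₂] at this
    linarith
  have i₂₃ : ⟪u₂, u₃⟫ = r₂ * r₃ / 2 := by
    have := InnerProductGeometry.cos_angle_mul_norm_mul_norm u₂ u₃
    rw [show InnerProductGeometry.angle u₂ u₃ = ∠ C₂ X C₃ from rfl, a₂₃,
      Real.cos_pi_div_three, n₂, n₃] at this
    linarith
  have i₁₃ : ⟪u₁, u₃⟫ = -(r₁ * r₃) / 2 := by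
    have := InnerProductGeometry.cos_angle_mul_norm_mul_norm u₁ u₃
    rw [show InnerProductGeometry.angle u₁ u₃ = ∠ C₁ X C₃ from rfl, a₁₃,
      show (2 : ℝ) * π / 3 = π - π / 3 by ring, Real.cos_pi_sub,
      Real.cos_pi_div_three, n₁, n₃] at this
    linarith
  have key : u₂ = (r₂ / r₁) • u₁ + (r₂ / r₃) • u₃ := by
    have hz : ⟪u₂ - ((r₂ / r₁) • u₁ + (r₂ / r₃) • u₃),
        u₂ - ((r₂ / r₁) • u₁ + (r₂ / r₃) • u₃)⟫ = 0 := by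
      have e₁ : ⟪u₁, u₁⟫ = r₁ ^ 2 := by
        rw [real_inner_self_eq_norm_sq, n₁]
      have e₂ : ⟪u₂, u₂⟫ = r₂ ^ 2 := by
        rw [real_inner_self_eq_norm_sq, n₂]
      have e₃ : ⟪u₃, u₃⟫ = r₃ ^ 2 := by
        rw [real_inner_self_eq_norm_sq, n₃]
      have c₁₂ : ⟪u₂, u₁⟫ = r₁ * r₂ / 2 := by rw [real_inner_comm]; exact i₁₂
      have c₂₃ : ⟪u₃, u₂⟫ = r₂ * r₃ / 2 := by rw [real_inner_comm]; exact i₂₃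
      have c₁₃ : ⟪u₃, u₁⟫ = -(r₁ * r₃) / 2 := by rw [real_inner_comm]; exact i₁₃
      simp only [inner_sub_left, inner_sub_right, inner_add_left, inner_add_right,
        real_inner_smul_left, real_inner_smul_right, e₁, e₂, e₃,
        c₁₂, c₂₃, c₁₃, i₁₂, i₂₃, i₁₃]
      field_simp
      ring
    have := inner_self_eq_zero.mp hz
    have h := sub_eq_zero.mp this
    exact h
  have hcoef : r₂ / r₁ + r₂ / r₃ = 1 := by
    field_simp
    field_simp at hsum
    nlinarith [hsum]
  have hC₂ : C₂ = AffineMap.lineMap C₁ C₃ (r₂ / r₃) := by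
    have : C₂ -ᵥ C₁ = (r₂ / r₃) • (C₃ -ᵥ C₁) := by
      have : C₂ -ᵥ C₁ = u₂ - u₁ := by
        simp [hu₁, hu₂, vsub_sub_vsub_cancel_right]
      rw [this, key, show C₃ -ᵥ C₁ = u₃ - u₁ by simp [hu₁, hu₃]]
      rw [smul_sub]
      have : (r₂ / r₁ : ℝ) = 1 - r₂ / r₃ := by linarith
      rw [this]
      module
    rw [AffineMap.lineMap_apply]
    rw [← this]
    simp
  have hmem : C₂ ∈ line[ℝ, C₁, C₃] := by
    rw [hC₂]; exact AffineMap.lineMap_mem_affineSpan_pair _ _ _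
  rw [Set.insert_comm]
  exact (collinear_insert_iff_of_mem_affineSpan hmem).2 (collinear_pair _ _ _)
end

section
/- Let X, C₁, C₂, C₃ be points in the Euclidean plane with distances rᵢ = dist(X, Cᵢ) > 0, such that angle C₁XC₂ = π/3, angle C₂XC₃ = π/3, angle C₁XC₃ = 2π/3, and C₂ lies strictly between C₁ and C₃ on a common line. Then 1/r₁ - 1/r₂ + 1/r₃ = 0. -/
open EuclideanGeometry
open scoped EuclideanGeometry Real RealInnerProductSpace

lemma inner_eq_cos_angle (X p q : EuclideanSpace ℝ (Fin 2)) (hp : p ≠ X) (hq : q ≠ X) :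
    ⟪p - X, q - X⟫ = Real.cos (∠ p X q) * (dist X p * dist X q) := by
  have h : ∠ p X q = InnerProductGeometry.angle (p - X) (q - X) := rfl
  have hnp : ‖p - X‖ ≠ 0 := by
    simp [sub_eq_zero, hp]
  have hnq : ‖q - X‖ ≠ 0 := by
    simp [sub_eq_zero, hq]
  rw [h, InnerProductGeometry.cos_angle, dist_comm X p, dist_comm X q, dist_eq_norm,
    dist_eq_norm]
  field_simp

theorem stmt_1 (X C₁ C₂ C₃ : EuclideanSpace ℝ (Fin 2))
    (r₁ r₂ r₃ : ℝ)
    (hr₁ : r₁ = dist X C₁) (hr₂ : r₂ = dist X C₂) (hr₃ : r₃ = dist X C₃)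
    (h₁ : 0 < r₁) (h₂ : 0 < r₂) (h₃ : 0 < r₃)
    (a₁₂ : ∠ C₁ X C₂ = π / 3) (a₂₃ : ∠ C₂ X C₃ = π / 3)
    (a₁₃ : ∠ C₁ X C₃ = 2 * π / 3)
    (hbtw : C₂ ∈ openSegment ℝ C₁ C₃) :
    1 / r₁ - 1 / r₂ + 1 / r₃ = 0 := by
  obtain ⟨a, b, ha, hb, hab, hC⟩ := hbtw
  have hne₁ : C₁ ≠ X := by
    intro h; rw [h] at hr₁; simp at hr₁; linarith
  have hne₂ : C₂ ≠ X := by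
    intro h; rw [h] at hr₂; simp at hr₂; linarith
  have hne₃ : C₃ ≠ X := by
    intro h; rw [h] at hr₃; simp at hr₃; linarith
  have hcos23 : Real.cos (2 * π / 3) = -(1/2) := by
    rw [show (2 * π / 3 : ℝ) = π - π / 3 by ring, Real.cos_pi_sub, Real.cos_pi_div_three]
  have i12 : ⟪C₁ - X, C₂ - X⟫ = (1/2) * (r₁ * r₂) := by
    rw [inner_eq_cos_angle X C₁ C₂ hne₁ hne₂, a₁₂, Real.cos_pi_div_three, ← hr₁, ← hr₂]
  have i23 : ⟪C₂ - X, C₃ - X⟫ = (1/2) * (r₂ * r₃) := by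
    rw [inner_eq_cos_angle X C₂ C₃ hne₂ hne₃, a₂₃, Real.cos_pi_div_three, ← hr₂, ← hr₃]
  have i13 : ⟪C₁ - X, C₃ - X⟫ = -(1/2) * (r₁ * r₃) := by
    rw [inner_eq_cos_angle X C₁ C₃ hne₁ hne₃, a₁₃, hcos23, ← hr₁, ← hr₃]
  have hv2 : C₂ - X = a • (C₁ - X) + b • (C₃ - X) := by
    rw [← hC]
    match_scalars <;> linarith
  have hn1 : ⟪C₁ - X, C₁ - X⟫ = r₁ ^ 2 := by
    rw [real_inner_self_eq_norm_sq, ← dist_eq_norm, dist_comm, ← hr₁]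
  have hn3 : ⟪C₃ - X, C₃ - X⟫ = r₃ ^ 2 := by
    rw [real_inner_self_eq_norm_sq, ← dist_eq_norm, dist_comm, ← hr₃]
  have e1 : a * r₁ ^ 2 + b * (-(1/2) * (r₁ * r₃)) = (1/2) * (r₁ * r₂) := by
    rw [← hn1, ← i13, ← i12, hv2, inner_add_right, real_inner_smul_right,
      real_inner_smul_right]
  have e2 : a * (-(1/2) * (r₁ * r₃)) + b * r₃ ^ 2 = (1/2) * (r₂ * r₃) := by
    rw [← hn3, ← i13, ← i23, hv2, inner_add_left, real_inner_smul_left,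
      real_inner_smul_left]
  have f1 : a * r₁ - b * r₃ / 2 - r₂ / 2 = 0 := by
    have h : r₁ * (a * r₁ - b * r₃ / 2 - r₂ / 2) = 0 := by linear_combination e1
    rcases mul_eq_zero.1 h with h' | h'
    · exact absurd h' h₁.ne'
    · exact h'
  have f2 : -(a * r₁) / 2 + b * r₃ - r₂ / 2 = 0 := by
    have h : r₃ * (-(a * r₁) / 2 + b * r₃ - r₂ / 2) = 0 := by linear_combination e2
    rcases mul_eq_zero.1 h with h' | h'
    · exact absurd h' h₃.ne'
    · exact h'
  have ga : a * r₁ = r₂ := by linarith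
  have gb : b * r₃ = r₂ := by linarith
  have key : r₂ * r₃ - r₁ * r₃ + r₁ * r₂ = 0 := by
    linear_combination -r₃ * ga - r₁ * gb + r₁ * r₃ * hab
  field_simp
  linarith [key]
end
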